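/- arXiv:1507.02874 — 2 statements merged into one kernel-verified Lean document; each statement's English description precedes it below -/
import Mathlib

section
/- Let X_1,…,X_m (m ≥ 2) be isentropic random variables. For a partition P of M = {1,…,m} with |P| ≥ 2 cells, define δ(P) = (1/(|P|−1)) ∑_{A ∈ P} H(X_{M\A} | X_A). Then for every nonempty B ⊆ M with |B| ≤ m−2, δ(P_B) ≤ δ(S), where P_B is the partition whose cells are the complement B^c together with the singletons of elements of B, and S is the partition of M into singletons. -/
open Finset

/-- The probability that the random variable `X` takes the value `a`. -/
noncomputable def prb {Ω α : Type*} [Fintype Ω] [DecidableEq α]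
    (p : Ω → ℝ) (X : Ω → α) (a : α) : ℝ :=
  ∑ ω ∈ Finset.univ.filter (fun ω => X ω = a), p ω

/-- Shannon entropy of a random variable `X` on a finite probability space. -/
noncomputable def ent {Ω α : Type*} [Fintype Ω] [Fintype α] [DecidableEq α]
    (p : Ω → ℝ) (X : Ω → α) : ℝ :=
  ∑ a : α, Real.negMulLog (prb p X a)

/-- Joint Shannon entropy `H(X_A)` of the collection `(X_i : i ∈ A)`. -/
noncomputable def entS {Ω ι α : Type*} [Fintype Ω] [DecidableEq ι]
    [Fintype α] [DecidableEq α] (p : Ω → ℝ) (X : ι → Ω → α) (A : Finset ι) : ℝ :=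
  ent p (fun ω => fun i : A => X i.1 ω)
/-!
Joint entropy is submodular, `H(A ∪ B) + H(A ∩ B) ≤ H(A) + H(B)`, by Gibbs' inequality
`log x ≤ x - 1` applied against the coupling in which `X_{A∖B}` and `X_{B∖A}` are conditionally
independent given `X_{A∩B}`. For isentropic variables `H(A) = h(|A|)` on nonempty `A`, and
submodularity on two `(k+1)`-sets meeting in `k` points makes `h` concave on `1, …, m`.
With `b = |B|` the claim `δ(P_B) ≤ δ(S)` is the comparison of secant slopes
`(h m - h (m - b)) / b ≤ (h m - h 1) / (m - 1)` of this concave sequence.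
-/

open Real

section Entropy

variable {Ω α β γ : Type*} [Fintype Ω] (p : Ω → ℝ)

lemma prb_nonneg [DecidableEq α] (hp0 : ∀ ω, 0 ≤ p ω) (Y : Ω → α) (a : α) :
    0 ≤ prb p Y a :=
  sum_nonneg fun ω _ => hp0 ω

lemma prb_pos [DecidableEq α] (hp0 : ∀ ω, 0 ≤ p ω) (Y : Ω → α) {ω : Ω} (hω : 0 < p ω) :
    0 < prb p Y (Y ω) :=
  hω.trans_le <| single_le_sum (fun ω' _ => hp0 ω') (by simp)

lemma sum_prb [Fintype α] [DecidableEq α] (Y : Ω → α) : ∑ a, prb p Y a = ∑ ω, p ω :=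
  sum_fiberwise univ Y p

lemma sum_prb_prodMk_right [DecidableEq α] [Fintype β] [DecidableEq β] (U : Ω → α) (V : Ω → β)
    (u : α) : ∑ v, prb p (fun ω => (U ω, V ω)) (u, v) = prb p U u := by
  rw [prb, ← sum_fiberwise _ V p]
  simp only [prb, filter_filter, Prod.mk.injEq]

lemma sum_mul_div_prb_le [Fintype α] [DecidableEq α] (Y : Ω → α)
    {f : α → ℝ} (hf : ∀ a, 0 ≤ f a) :
    ∑ ω, p ω * (f (Y ω) / prb p Y (Y ω)) ≤ ∑ a, f a := by
  rw [← sum_fiberwise univ Y]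
  refine sum_le_sum fun a _ => ?_
  have hfiber : ∑ ω ∈ univ with Y ω = a, p ω * (f (Y ω) / prb p Y (Y ω))
      = prb p Y a * (f a / prb p Y a) := by
    unfold prb
    rw [sum_mul]
    exact sum_congr rfl fun ω hω => by rw [(mem_filter.mp hω).2]
  rw [hfiber]
  rcases eq_or_ne (prb p Y a) 0 with h | h
  · simpa [h] using hf a
  · rw [mul_div_cancel₀ _ h]

lemma ent_eq_neg_sum_mul_log_prb [Fintype α] [DecidableEq α] (Y : Ω → α) :
    ent p Y = -∑ ω, p ω * log (prb p Y (Y ω)) := by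
  rw [ent, ← sum_fiberwise univ Y, ← sum_neg_distrib]
  refine sum_congr rfl fun a _ => ?_
  unfold prb
  rw [negMulLog, neg_mul, sum_mul]
  exact congrArg _ (sum_congr rfl fun ω hω => by rw [(mem_filter.mp hω).2])

lemma ent_congr [Fintype α] [DecidableEq α] [Fintype β] [DecidableEq β] {Y : Ω → α}
    {Z : Ω → β} (h : ∀ ω ω', Y ω' = Y ω ↔ Z ω' = Z ω) : ent p Y = ent p Z := by
  simp only [ent_eq_neg_sum_mul_log_prb, prb, h]

lemma ent_submodular [Fintype α] [DecidableEq α] [Fintype β] [DecidableEq β] [Fintype γ]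
    [DecidableEq γ] (hp0 : ∀ ω, 0 ≤ p ω) (U : Ω → α) (V : Ω → β) (W : Ω → γ) :
    ent p (fun ω => (U ω, V ω, W ω)) + ent p U
      ≤ ent p (fun ω => (U ω, V ω)) + ent p (fun ω => (U ω, W ω)) := by
  set Y := fun ω => (U ω, V ω, W ω)
  set UV := fun ω => (U ω, V ω)
  set UW := fun ω => (U ω, W ω)
  -- `f` is the law of `(U, V, W)` when `V` and `W` are made conditionally independent given `U`.
  set f : α × β × γ → ℝ := fun x => prb p UV (x.1, x.2.1) * prb p UW (x.1, x.2.2) / prb p U x.1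
  have hf_nonneg : ∀ x, 0 ≤ f x := fun x =>
    div_nonneg (mul_nonneg (prb_nonneg p hp0 _ _) (prb_nonneg p hp0 _ _)) (prb_nonneg p hp0 _ _)
  have hf_sum : ∑ x, f x = ∑ ω, p ω := by
    simp only [f, UV, UW, Fintype.sum_prod_type, ← sum_div, ← mul_sum, ← sum_mul,
      sum_prb_prodMk_right, mul_self_div_self, sum_prb]
  have hpointwise : ∀ ω, p ω * (log (prb p UV (UV ω)) + log (prb p UW (UW ω))
      - log (prb p Y (Y ω)) - log (prb p U (U ω))) ≤ p ω * (f (Y ω) / prb p Y (Y ω)) - p ω := by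
    intro ω
    rcases (hp0 ω).eq_or_lt with h | h
    · simp [← h]
    have hUV := prb_pos p hp0 UV h
    have hUW := prb_pos p hp0 UW h
    have hY := prb_pos p hp0 Y h
    have hU := prb_pos p hp0 U h
    have hlog : log (prb p UV (UV ω)) + log (prb p UW (UW ω)) - log (prb p Y (Y ω))
        - log (prb p U (U ω)) = log (f (Y ω) / prb p Y (Y ω)) := by
      rw [log_div (by positivity) hY.ne', log_div (by positivity) hU.ne', log_mul hUV.ne' hUW.ne']
      ring
    rw [hlog, ← mul_sub_one]
    exact mul_le_mul_of_nonneg_left (log_le_sub_one_of_pos (by positivity)) h.le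
  have hgibbs := sum_le_sum fun ω (_ : ω ∈ univ) => hpointwise ω
  have hnorm := sum_mul_div_prb_le p Y hf_nonneg
  simp only [ent_eq_neg_sum_mul_log_prb]
  simp only [mul_sub, mul_add, sum_sub_distrib, sum_add_distrib] at hgibbs
  linarith

end Entropy

lemma entS_union_add_entS_inter_le {Ω ι α : Type*} [Fintype Ω] [DecidableEq ι] [Fintype α]
    [DecidableEq α] (p : Ω → ℝ) (hp0 : ∀ ω, 0 ≤ p ω) (X : ι → Ω → α) (A B : Finset ι) :
    entS p X (A ∪ B) + entS p X (A ∩ B) ≤ entS p X A + entS p X B := by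
  let R (S : Finset ι) (ω : Ω) : S → α := fun i => X i ω
  have hunion : entS p X (A ∪ B) = ent p fun ω => (R (A ∩ B) ω, R A ω, R B ω) :=
    ent_congr p fun ω ω' => by
      simp only [R, funext_iff, Prod.mk.injEq, Subtype.forall, mem_union, mem_inter]
      grind
  have hA : entS p X A = ent p fun ω => (R (A ∩ B) ω, R A ω) :=
    ent_congr p fun ω ω' => by
      simp only [R, funext_iff, Prod.mk.injEq, Subtype.forall, mem_inter]
      grind
  have hB : entS p X B = ent p fun ω => (R (A ∩ B) ω, R B ω) :=
    ent_congr p fun ω ω' => by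
      simp only [R, funext_iff, Prod.mk.injEq, Subtype.forall, mem_inter]
      grind
  rw [hunion, hA, hB]
  exact ent_submodular p hp0 _ _ _

lemma exists_eq_comp_card {ι β : Type*} (f : Finset ι → β)
    (hf : ∀ A B : Finset ι, A.Nonempty → B.Nonempty → #A = #B → f A = f B) :
    ∃ g : ℕ → β, ∀ A : Finset ι, A.Nonempty → f A = g #A := by
  classical
  refine ⟨fun k => if h : ∃ A : Finset ι, A.Nonempty ∧ #A = k then f h.choose else f ∅,
    fun A hA => ?_⟩
  have h : ∃ A' : Finset ι, A'.Nonempty ∧ #A' = #A := ⟨A, hA, rfl⟩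
  simp only [dif_pos h]
  exact hf _ _ hA h.choose_spec.1 h.choose_spec.2.symm

lemma antitoneOn_increments_of_submodular {ι : Type*} [Fintype ι] [DecidableEq ι]
    {f : Finset ι → ℝ} {g : ℕ → ℝ} (hsub : ∀ A B, f (A ∪ B) + f (A ∩ B) ≤ f A + f B)
    (hg : ∀ A : Finset ι, A.Nonempty → f A = g #A) :
    AntitoneOn (fun k => g (k + 1) - g k) (Set.Icc 1 (Fintype.card ι - 1)) := by
  refine antitoneOn_of_add_one_le Set.ordConnected_Icc fun k _ ⟨hk, _⟩ ⟨_, hk2⟩ => ?_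
  obtain ⟨T, -, hT⟩ := exists_subset_card_eq (s := (univ : Finset ι)) (n := k + 2)
    (by rw [card_univ]; omega)
  obtain ⟨i, hi, j, hj, hij⟩ := one_lt_card.mp (by omega : 1 < #T)
  have hunion : T.erase i ∪ T.erase j = T := by
    ext x
    simp only [mem_union, mem_erase]
    grind
  have hinter : T.erase i ∩ T.erase j = (T.erase i).erase j := by
    ext x
    simp only [mem_inter, mem_erase]
    grind
  have hcard_i : #(T.erase i) = k + 1 := by simp [card_erase_of_mem hi, hT]
  have hcard_j : #(T.erase j) = k + 1 := by simp [card_erase_of_mem hj, hT]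
  have hcard_ij : #((T.erase i).erase j) = k := by
    simp [card_erase_of_mem (mem_erase.mpr ⟨hij.symm, hj⟩), hcard_i]
  have key := hsub (T.erase i) (T.erase j)
  rw [hunion, hinter, hg T (card_pos.mp (by omega)), hg _ (card_pos.mp (by omega)),
    hg (T.erase i) (card_pos.mp (by omega)), hg (T.erase j) (card_pos.mp (by omega)), hT,
    hcard_i, hcard_j, hcard_ij] at key
  linarith

lemma mul_sub_le_mul_sub_of_antitoneOn_increments {g : ℕ → ℝ} {n s : ℕ}
    (hg : AntitoneOn (fun k => g (k + 1) - g k) (Set.Icc 1 (n - 1))) (hs : 2 ≤ s) (hsn : s ≤ n) :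
    ((n : ℝ) - 1) * (g n - g s) ≤ ((n : ℝ) - s) * (g n - g 1) := by
  set c := g (s - 1 + 1) - g (s - 1)
  have hupper : g n - g s ≤ ((n : ℝ) - s) * c := by
    rw [← sum_Ico_sub g hsn]
    refine (sum_le_card_nsmul _ _ c fun k hk => ?_).trans_eq ?_
    · rw [mem_Ico] at hk
      exact hg ⟨by omega, by omega⟩ ⟨by omega, by omega⟩ (by omega)
    · rw [Nat.card_Ico, nsmul_eq_mul, Nat.cast_sub hsn]
  have hlower : ((s : ℝ) - 1) * c ≤ g s - g 1 := by
    rw [← sum_Ico_sub g (by omega : 1 ≤ s)]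
    refine le_of_eq_of_le ?_ (card_nsmul_le_sum _ _ c fun k hk => ?_)
    · rw [Nat.card_Ico, nsmul_eq_mul, Nat.cast_sub (by omega), Nat.cast_one]
    · rw [mem_Ico] at hk
      exact hg ⟨by omega, by omega⟩ ⟨by omega, by omega⟩ (by omega)
  have hs1 : (0 : ℝ) ≤ s - 1 := by
    have : (2 : ℝ) ≤ s := by exact_mod_cast hs
    linarith
  have hns : (0 : ℝ) ≤ n - s := sub_nonneg.mpr (by exact_mod_cast hsn)
  nlinarith [mul_le_mul_of_nonneg_left hupper hs1, mul_le_mul_of_nonneg_left hlower hns]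

theorem isentropic_deltaPB_le_deltaS_general {Ω α : Type*} [Fintype Ω] [Fintype α] [DecidableEq α]
    {m : ℕ} (p : Ω → ℝ) (hp0 : ∀ ω, 0 ≤ p ω)
    (X : Fin m → Ω → α)
    (hiso : ∀ A B : Finset (Fin m), A.Nonempty → B.Nonempty → A.card = B.card →
      entS p X A = entS p X B)
    (B : Finset (Fin m)) (hB : B.Nonempty) (hBcard : B.card ≤ m - 2) :
    (1 / (B.card : ℝ)) *
        ((entS p X Finset.univ - entS p X Bᶜ)
          + ∑ b ∈ B, (entS p X Finset.univ - entS p X {b}))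
      ≤ (1 / ((m : ℝ) - 1)) *
        ∑ i : Fin m, (entS p X Finset.univ - entS p X {i}) := by
  obtain ⟨g, hg⟩ := exists_eq_comp_card _ hiso
  have hconcave := antitoneOn_increments_of_submodular (entS_union_add_entS_inter_le p hp0 X) hg
  rw [Fintype.card_fin] at hconcave
  have hb : 0 < #B := card_pos.mpr hB
  have hchord := mul_sub_le_mul_sub_of_antitoneOn_increments hconcave (s := m - #B) (by omega)
    (by omega)
  have huniv : entS p X univ = g m := by
    rw [hg univ (univ_nonempty_iff.mpr ⟨⟨0, by omega⟩⟩), card_univ, Fintype.card_fin]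
  have hcompl : entS p X Bᶜ = g (m - #B) := by
    rw [hg Bᶜ (card_pos.mp (by rw [card_compl, Fintype.card_fin]; omega)), card_compl,
      Fintype.card_fin]
  have hsingleton (i : Fin m) : entS p X {i} = g 1 := by
    rw [hg {i} (singleton_nonempty i), card_singleton]
  simp only [huniv, hcompl, hsingleton, sum_const, card_univ, Fintype.card_fin, nsmul_eq_mul]
  rw [Nat.cast_sub (by omega)] at hchord
  have hbR : (0 : ℝ) < #B := by exact_mod_cast hb
  have hmR : (1 : ℝ) < m := by exact_mod_cast (by omega : 1 < m)
  rw [one_div_mul_eq_div, one_div_mul_eq_div, div_le_div_iff₀ hbR (by linarith)]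
  nlinarith

/-- For isentropic `X_1,…,X_m` (`m ≥ 2`) and nonempty `B ⊆ M` with `|B| ≤ m−2`,
`δ(P_B) ≤ δ(S)`, where `δ(P) = (1/(|P|−1)) ∑_{A ∈ P} H(X_{M∖A} | X_A)`, `P_B` is the
partition `{Bᶜ} ∪ {{b} : b ∈ B}` and `S` is the singleton partition.  Here
`H(X_{M∖A}|X_A) = H(X_M) − H(X_A)`. -/
theorem isentropic_deltaPB_le_deltaS {Ω α : Type*} [Fintype Ω] [Fintype α] [DecidableEq α]
    {m : ℕ} (hm : 2 ≤ m) (p : Ω → ℝ) (hp0 : ∀ ω, 0 ≤ p ω) (hp1 : ∑ ω : Ω, p ω = 1)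
    (X : Fin m → Ω → α)
    (hiso : ∀ A B : Finset (Fin m), A.Nonempty → B.Nonempty → A.card = B.card →
      entS p X A = entS p X B)
    (B : Finset (Fin m)) (hB : B.Nonempty) (hBcard : B.card ≤ m - 2) :
    (1 / (B.card : ℝ)) *
        ((entS p X Finset.univ - entS p X Bᶜ)
          + ∑ b ∈ B, (entS p X Finset.univ - entS p X {b}))
      ≤ (1 / ((m : ℝ) - 1)) *
        ∑ i : Fin m, (entS p X Finset.univ - entS p X {i}) :=
  isentropic_deltaPB_le_deltaS_general p hp0 X hiso B hB hBcard
end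

section
/- Let X_1,…,X_m (m ≥ 3) be jointly distributed random variables and Δ as above. If Δ(S) ≤ Δ(P_B) for every subset B of M with 1 ≤ |B| ≤ m−2, then Δ(S) ≤ Δ(P) for every partition P of M with |P| ≥ 2. Moreover, if the hypothesis holds with strict inequalities, then Δ(S) < Δ(P) for every partition P ≠ S with |P| ≥ 2. -/
/-!
For a part `A` of `P`, the hypothesis for `B = Aᶜ` reads
`(m - |A|) Δ(S) ≤ H(X_A) + ∑_{i ∉ A} H(X_i) - H(X_M)`, with equality when `|A| = 1`.
Summing over the `k` parts of `P`, the left side becomes `(k - 1) m Δ(S)` and the right side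
`(k - 1) Δ(P) + (k - 1)(m - 1) Δ(S)`, so `Δ(S) ≤ Δ(P)`. If `P ≠ S`, some part has at least two
elements and its inequality is strict.
-/

open Finset

/-- `Δ(P) = (1/(|P|−1)) (∑_{A ∈ P} H(X_A) − H(X_M))` for a partition `P` of `M`. -/
noncomputable def dPart {Ω α : Type*} {m : ℕ} [Fintype Ω] [Fintype α] [DecidableEq α]
    (p : Ω → ℝ) (X : Fin m → Ω → α)
    (P : Finpartition (Finset.univ : Finset (Fin m))) : ℝ :=
  (1 / ((P.parts.card : ℝ) - 1)) * (∑ A ∈ P.parts, entS p X A - entS p X Finset.univ)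

/-- `Δ(S)` for the singleton partition `S`. -/
noncomputable def dS {Ω α : Type*} {m : ℕ} [Fintype Ω] [Fintype α] [DecidableEq α]
    (p : Ω → ℝ) (X : Fin m → Ω → α) : ℝ :=
  (1 / ((m : ℝ) - 1)) * (∑ i : Fin m, entS p X {i} - entS p X Finset.univ)

/-- `Δ(P_B)` for the partition `P_B = {Bᶜ} ∪ {{b} : b ∈ B}` (so `|P_B| − 1 = |B|`). -/
noncomputable def dPB {Ω α : Type*} {m : ℕ} [Fintype Ω] [Fintype α] [DecidableEq α]
    (p : Ω → ℝ) (X : Fin m → Ω → α) (B : Finset (Fin m)) : ℝ :=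
  (1 / (B.card : ℝ)) *
    (entS p X Bᶜ + ∑ b ∈ B, entS p X {b} - entS p X Finset.univ)

namespace Finpartition

variable {ι : Type*} [DecidableEq ι] {s : Finset ι} (P : Finpartition s)

theorem sum_sum_parts {M : Type*} [AddCommMonoid M] (f : ι → M) :
    ∑ A ∈ P.parts, ∑ i ∈ A, f i = ∑ i ∈ s, f i := by
  conv_rhs => rw [← P.biUnion_parts, Finset.sum_biUnion P.supIndep.pairwiseDisjoint]
  rfl

variable {P}

theorem card_lt_card_of_mem_parts (hP : 2 ≤ #P.parts) {A : Finset ι} (hA : A ∈ P.parts) :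
    #A < #s := by
  obtain ⟨B, hB, hBA⟩ := exists_mem_ne hP A
  obtain ⟨x, hx⟩ := P.nonempty_of_mem_parts hB
  refine card_lt_card (ssubset_iff_of_subset (P.subset hA) |>.2 ⟨x, P.subset hB hx, ?_⟩)
  exact disjoint_left.1 (P.disjoint hB hA hBA) hx

theorem exists_one_lt_card_of_parts_ne (hP : P.parts ≠ s.image singleton) :
    ∃ A ∈ P.parts, 1 < #A := by
  by_contra! hsmall
  have hone : ∀ A ∈ P.parts, #A = 1 := fun A hA =>
    le_antisymm (hsmall A hA) (P.nonempty_of_mem_parts hA).card_pos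
  refine hP (eq_of_subset_of_card_le (fun A hA => ?_) ?_)
  · obtain ⟨i, rfl⟩ := card_eq_one.1 (hone A hA)
    exact mem_image_of_mem _ (P.subset hA (mem_singleton_self i))
  · calc #(s.image singleton) ≤ #s := card_image_le
      _ = #P.parts := by rw [← P.sum_card_parts, sum_congr rfl hone, card_eq_sum_ones]

end Finpartition

section SetFunction

variable {ι : Type*} [Fintype ι] [DecidableEq ι] (h : Finset ι → ℝ)
  (P : Finpartition (univ : Finset ι))

theorem sum_parts_add_sum_compl_singleton :
    ∑ A ∈ P.parts, (h A + ∑ i ∈ Aᶜ, h {i} - h univ)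
      = (∑ A ∈ P.parts, h A - h univ) + (#P.parts - 1) * (∑ i, h {i} - h univ) := by
  have hcompl (A : Finset ι) : ∑ i ∈ Aᶜ, h {i} = ∑ i, h {i} - ∑ i ∈ A, h {i} :=
    eq_sub_of_add_eq (sum_compl_add_sum A _)
  simp only [sum_sub_distrib, sum_add_distrib, sum_const, nsmul_eq_mul, hcompl,
    P.sum_sum_parts]
  ring

theorem sum_parts_mul_card_compl (d : ℝ) :
    ∑ A ∈ P.parts, d * (Fintype.card ι - #A) = d * (#P.parts - 1) * Fintype.card ι := by
  have hcard : ∑ A ∈ P.parts, (#A : ℝ) = Fintype.card ι := by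
    exact_mod_cast P.sum_card_parts
  rw [← mul_sum, sum_sub_distrib, hcard, sum_const, nsmul_eq_mul]
  ring

variable {h P} {d : ℝ}

theorem mul_card_parts_sub_one_le (hd : d * (Fintype.card ι - 1) = ∑ i, h {i} - h univ)
    (hparts : ∀ A ∈ P.parts, d * (Fintype.card ι - #A) ≤ h A + ∑ i ∈ Aᶜ, h {i} - h univ) :
    d * (#P.parts - 1) ≤ ∑ A ∈ P.parts, h A - h univ := by
  have hsum := sum_le_sum hparts
  rw [sum_parts_mul_card_compl, sum_parts_add_sum_compl_singleton, ← hd] at hsum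
  linarith

theorem mul_card_parts_sub_one_lt (hd : d * (Fintype.card ι - 1) = ∑ i, h {i} - h univ)
    (hparts : ∀ A ∈ P.parts, d * (Fintype.card ι - #A) ≤ h A + ∑ i ∈ Aᶜ, h {i} - h univ)
    (hstrict : ∃ A ∈ P.parts, d * (Fintype.card ι - #A) < h A + ∑ i ∈ Aᶜ, h {i} - h univ) :
    d * (#P.parts - 1) < ∑ A ∈ P.parts, h A - h univ := by
  have hsum := sum_lt_sum hparts hstrict
  rw [sum_parts_mul_card_compl, sum_parts_add_sum_compl_singleton, ← hd] at hsum
  linarith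

end SetFunction

section Entropy

variable {Ω α : Type*} [Fintype Ω] [Fintype α] [DecidableEq α] {m : ℕ}
  {p : Ω → ℝ} {X : Fin m → Ω → α}

theorem dS_mul_sub_one (hm : 2 ≤ m) :
    dS p X * (m - 1) = ∑ i, entS p X {i} - entS p X univ := by
  have hm1 : (m : ℝ) - 1 ≠ 0 := by
    rw [sub_ne_zero, Nat.cast_ne_one]
    omega
  rw [dS, one_div_mul_eq_div, div_mul_cancel₀ _ hm1]

theorem dPart_eq_div (P : Finpartition (univ : Finset (Fin m))) :
    dPart p X P = (∑ A ∈ P.parts, entS p X A - entS p X univ) / (#P.parts - 1) :=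
  one_div_mul_eq_div _ _

theorem dPB_compl_eq_div {A : Finset (Fin m)} (hA : #A ≤ m) :
    dPB p X Aᶜ = (entS p X A + ∑ i ∈ Aᶜ, entS p X {i} - entS p X univ) / (m - #A) := by
  rw [dPB, compl_compl, card_compl, Fintype.card_fin, Nat.cast_sub hA, one_div_mul_eq_div]

theorem dS_mul_card_compl_eq_of_card_eq_one (hm : 2 ≤ m) {A : Finset (Fin m)} (hA : #A = 1) :
    dS p X * (m - #A) = entS p X A + ∑ i ∈ Aᶜ, entS p X {i} - entS p X univ := by
  obtain ⟨i, rfl⟩ := card_eq_one.1 hA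
  rw [card_singleton, Nat.cast_one, dS_mul_sub_one hm, ← sum_compl_add_sum {i}, sum_singleton]
  ring

theorem dS_mul_card_compl_le_of_mem_parts
    (hw : ∀ B : Finset (Fin m), 1 ≤ #B → #B ≤ m - 2 → dS p X ≤ dPB p X B)
    {P : Finpartition (univ : Finset (Fin m))} (hP : 2 ≤ #P.parts)
    {A : Finset (Fin m)} (hA : A ∈ P.parts) :
    dS p X * (m - #A) ≤ entS p X A + ∑ i ∈ Aᶜ, entS p X {i} - entS p X univ := by
  have hAm : #A < m := by simpa using P.card_lt_card_of_mem_parts hP hA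
  obtain hA1 | hA1 := (one_le_card.2 (P.nonempty_of_mem_parts hA)).eq_or_lt
  · exact (dS_mul_card_compl_eq_of_card_eq_one (by omega) hA1.symm).le
  · have hcompl := hw Aᶜ (by rw [card_compl, Fintype.card_fin]; omega)
      (by rw [card_compl, Fintype.card_fin]; omega)
    rwa [dPB_compl_eq_div hAm.le, le_div_iff₀ (sub_pos.2 (Nat.cast_lt.2 hAm))] at hcompl

theorem dS_mul_card_compl_lt_of_one_lt_card
    (hs : ∀ B : Finset (Fin m), 1 ≤ #B → #B ≤ m - 2 → dS p X < dPB p X B)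
    {A : Finset (Fin m)} (hA1 : 1 < #A) (hAm : #A < m) :
    dS p X * (m - #A) < entS p X A + ∑ i ∈ Aᶜ, entS p X {i} - entS p X univ := by
  have hcompl := hs Aᶜ (by rw [card_compl, Fintype.card_fin]; omega)
    (by rw [card_compl, Fintype.card_fin]; omega)
  rwa [dPB_compl_eq_div hAm.le, lt_div_iff₀ (sub_pos.2 (Nat.cast_lt.2 hAm))] at hcompl

end Entropy

theorem singleton_partition_minimizer_general {Ω α : Type*} [Fintype Ω] [Fintype α] [DecidableEq α]
    {m : ℕ} (p : Ω → ℝ)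
    (X : Fin m → Ω → α) :
    ((∀ B : Finset (Fin m), 1 ≤ B.card → B.card ≤ m - 2 → dS p X ≤ dPB p X B) →
      ∀ P : Finpartition (Finset.univ : Finset (Fin m)), 2 ≤ P.parts.card →
        dS p X ≤ dPart p X P)
    ∧ ((∀ B : Finset (Fin m), 1 ≤ B.card → B.card ≤ m - 2 → dS p X < dPB p X B) →
      ∀ P : Finpartition (Finset.univ : Finset (Fin m)), 2 ≤ P.parts.card →
        P.parts ≠ Finset.univ.image (fun i : Fin m => ({i} : Finset (Fin m))) →
        dS p X < dPart p X P) := by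
  have hm2 (P : Finpartition (univ : Finset (Fin m))) (hP : 2 ≤ #P.parts) : 2 ≤ m :=
    hP.trans (by simpa using P.card_parts_le_card)
  refine ⟨fun hw P hP => ?_, fun hs P hP hS => ?_⟩
  · rw [dPart_eq_div, le_div_iff₀ (sub_pos.2 (Nat.one_lt_cast.2 hP))]
    refine mul_card_parts_sub_one_le ?_ ?_ <;> simp only [Fintype.card_fin]
    · exact dS_mul_sub_one (hm2 P hP)
    · exact fun A hA => dS_mul_card_compl_le_of_mem_parts hw hP hA
  · have hw B h1 h2 := (hs B h1 h2).le
    obtain ⟨A, hA, hA1⟩ := P.exists_one_lt_card_of_parts_ne hS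
    have hAm : #A < m := by simpa using P.card_lt_card_of_mem_parts hP hA
    rw [dPart_eq_div, lt_div_iff₀ (sub_pos.2 (Nat.one_lt_cast.2 hP))]
    refine mul_card_parts_sub_one_lt ?_ ?_ ?_ <;> simp only [Fintype.card_fin]
    · exact dS_mul_sub_one (hm2 P hP)
    · exact fun A hA => dS_mul_card_compl_le_of_mem_parts hw hP hA
    · exact ⟨A, hA, dS_mul_card_compl_lt_of_one_lt_card hs hA1 hAm⟩

/-- If `Δ(S) ≤ Δ(P_B)` for all `B` with `1 ≤ |B| ≤ m−2`, then `S` minimizes `Δ` over all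
partitions with at least 2 cells; with strict inequalities, `S` is the unique minimizer. -/
theorem singleton_partition_minimizer {Ω α : Type*} [Fintype Ω] [Fintype α] [DecidableEq α]
    {m : ℕ} (hm : 3 ≤ m) (p : Ω → ℝ) (hp0 : ∀ ω, 0 ≤ p ω) (hp1 : ∑ ω : Ω, p ω = 1)
    (X : Fin m → Ω → α) :
    ((∀ B : Finset (Fin m), 1 ≤ B.card → B.card ≤ m - 2 → dS p X ≤ dPB p X B) →
      ∀ P : Finpartition (Finset.univ : Finset (Fin m)), 2 ≤ P.parts.card →
        dS p X ≤ dPart p X P)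
    ∧ ((∀ B : Finset (Fin m), 1 ≤ B.card → B.card ≤ m - 2 → dS p X < dPB p X B) →
      ∀ P : Finpartition (Finset.univ : Finset (Fin m)), 2 ≤ P.parts.card →
        P.parts ≠ Finset.univ.image (fun i : Fin m => ({i} : Finset (Fin m))) →
        dS p X < dPart p X P) :=
  singleton_partition_minimizer_general p X
end
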